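/- arXiv:2602.02830 — 2 statements merged into one kernel-verified Lean document; each statement's English description precedes it below -/
import Mathlib

section
/- Let d be a positive natural number and B a d×d real matrix such that the directed edge relation r on Fin d defined by r i j iff B j i ≠ 0 is acyclic (for every i, the transitive closure of r does not relate i to i). Then the matrix I − B is invertible (it is a unit in the ring of d×d real matrices). -/
private lemma chain_transGen {α : Type*} (r : α → α → Prop) (f : ℕ → α) (n : ℕ)
    (hf : ∀ k < n, r (f k) (f (k+1))) :
    ∀ a b, a < b → b ≤ n → Relation.TransGen r (f a) (f b) := by
  intro a b hab hbn
  induction b with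
  | zero => omega
  | succ b ih =>
    rcases Nat.lt_succ_iff_lt_or_eq.mp hab with h | h
    · exact (ih h (by omega)).tail (hf b (by omega))
    · subst h
      exact Relation.TransGen.single (hf a (by omega))

private lemma pow_ne_zero_path (d : ℕ) (B : Matrix (Fin d) (Fin d) ℝ) :
    ∀ n (i j : Fin d), (B ^ n) i j ≠ 0 →
      ∃ f : ℕ → Fin d, f 0 = j ∧ f n = i ∧
        ∀ k < n, B (f (k+1)) (f k) ≠ 0 := by
  intro n
  induction n with
  | zero =>
    intro i j h
    simp only [pow_zero, Matrix.one_apply, ne_eq, ite_eq_right_iff, not_forall] at h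
    exact ⟨fun _ => j, rfl, h.1.symm ▸ rfl, by omega⟩
  | succ n ih =>
    intro i j h
    rw [pow_succ, Matrix.mul_apply] at h
    obtain ⟨k, hk⟩ : ∃ k, (B ^ n) i k * B k j ≠ 0 := by
      by_contra hc
      push_neg at hc
      exact h (Finset.sum_eq_zero fun k _ => hc k)
    have h1 : (B ^ n) i k ≠ 0 := fun h0 => hk (by simp [h0])
    have h2 : B k j ≠ 0 := fun h0 => hk (by simp [h0])
    obtain ⟨f, hf0, hfn, hstep⟩ := ih i k h1
    refine ⟨fun m => if m = 0 then j else f (m - 1), rfl, by simp [Nat.succ_ne_zero, hfn], ?_⟩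
    intro m hm
    rcases Nat.eq_zero_or_pos m with rfl | hmp
    · simpa [hf0] using h2
    · have : m - 1 < n := by omega
      simpa [Nat.pos_iff_ne_zero.mp hmp, Nat.succ_ne_zero, Nat.sub_add_cancel hmp] using
        hstep (m - 1) this

/-- If the directed graph of `B` (edge `i → j` iff `B j i ≠ 0`)
is acyclic, then `I - B` is invertible in the matrix ring. -/
theorem isUnit_one_sub_of_acyclic (d : ℕ) (hd : 0 < d)
    (B : Matrix (Fin d) (Fin d) ℝ)
    (hacyc : ∀ i : Fin d,
      ¬ Relation.TransGen (fun i j : Fin d => B j i ≠ 0) i i) :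
    IsUnit (1 - B) := by
  have hnil : IsNilpotent B := by
    refine ⟨d, ?_⟩
    ext i j
    by_contra h
    obtain ⟨f, hf0, hfd, hstep⟩ := pow_ne_zero_path d B d i j h
    obtain ⟨a, b, hab, hfab⟩ : ∃ a b : Fin (d+1), a ≠ b ∧ f a = f b := by
      obtain ⟨a, b, hab, hfab⟩ := Fintype.exists_ne_map_eq_of_card_lt
        (fun m : Fin (d+1) => f m) (by simp)
      exact ⟨a, b, hab, hfab⟩
    rcases lt_or_gt_of_ne hab with h' | h'
    · have := chain_transGen (fun i j : Fin d => B j i ≠ 0) f d hstep a b h' (by omega)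
      rw [hfab] at this
      exact hacyc _ this
    · have := chain_transGen (fun i j : Fin d => B j i ≠ 0) f d hstep b a h' (by omega)
      rw [← hfab] at this
      exact hacyc _ this
  exact hnil.isUnit_one_sub
end

section
/- Let d be a positive natural number and B a d×d real matrix with nonnegative entries (B i j ≥ 0 for all i, j). Define the directed edge relation r on Fin d by r i j iff B j i ≠ 0. Then B is nilpotent if and only if r is acyclic (for every i, the transitive closure of r does not relate i to i). -/
private lemma pow_entry_nonneg' {d : ℕ} (B : Matrix (Fin d) (Fin d) ℝ)
    (hB : ∀ i j, 0 ≤ B i j) : ∀ k i j, 0 ≤ (B ^ k) i j := by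
  intro k
  induction k with
  | zero =>
    intro i j
    simp only [pow_zero, Matrix.one_apply]
    split <;> norm_num
  | succ k ih =>
    intro i j
    rw [pow_succ, Matrix.mul_apply]
    exact Finset.sum_nonneg fun m _ => mul_nonneg (ih i m) (hB m j)

private lemma transGen_pow_pos' {d : ℕ} (B : Matrix (Fin d) (Fin d) ℝ)
    (hB : ∀ i j, 0 ≤ B i j) {i j : Fin d}
    (h : Relation.TransGen (fun a b : Fin d => B b a ≠ 0) i j) :
    ∃ k, 1 ≤ k ∧ 0 < (B ^ k) j i := by
  induction h with
  | single h =>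
    exact ⟨1, le_refl 1, by simpa [pow_one] using lt_of_le_of_ne (hB _ _) (Ne.symm h)⟩
  | tail h1 h2 ih =>
    obtain ⟨k, hk, hpos⟩ := ih
    refine ⟨k + 1, by omega, ?_⟩
    rw [pow_succ', Matrix.mul_apply]
    refine Finset.sum_pos'
      (fun m _ => mul_nonneg (hB _ _) (pow_entry_nonneg' B hB k m i)) ?_
    exact ⟨_, Finset.mem_univ _, mul_pos (lt_of_le_of_ne (hB _ _) (Ne.symm h2)) hpos⟩

private lemma diag_pow_mul_pos' {d : ℕ} (B : Matrix (Fin d) (Fin d) ℝ)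
    (hB : ∀ i j, 0 ≤ B i j) {i : Fin d} {k : ℕ}
    (hpos : 0 < (B ^ k) i i) : ∀ m, 0 < (B ^ (k * (m + 1))) i i := by
  intro m
  induction m with
  | zero => simpa using hpos
  | succ m ih =>
    have hkm : k * (m + 1 + 1) = k * (m + 1) + k := by ring
    rw [hkm, pow_add, Matrix.mul_apply]
    refine Finset.sum_pos'
      (fun x _ => mul_nonneg (pow_entry_nonneg' B hB _ i x) (pow_entry_nonneg' B hB _ x i)) ?_
    exact ⟨i, Finset.mem_univ i, mul_pos ih hpos⟩

/-- For a matrix with nonnegative entries, nilpotency is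
equivalent to acyclicity of the induced directed graph
(edge `i → j` iff `B j i ≠ 0`). -/
theorem isNilpotent_iff_acyclic_of_nonneg (d : ℕ) (hd : 0 < d)
    (B : Matrix (Fin d) (Fin d) ℝ) (hB : ∀ i j, 0 ≤ B i j) :
    IsNilpotent B ↔
      ∀ i : Fin d, ¬ Relation.TransGen (fun i j : Fin d => B j i ≠ 0) i i := by
  classical
  constructor
  · rintro ⟨n, hn⟩ i hcyc
    obtain ⟨k, hk1, hkpos⟩ := transGen_pow_pos' B hB hcyc
    have hpos := diag_pow_mul_pos' B hB hkpos n
    have hz : B ^ ((n + 1) * k) = 0 := by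
      rw [pow_mul, pow_succ, hn, Matrix.zero_mul, zero_pow (by omega : k ≠ 0)]
    rw [Nat.mul_comm, hz] at hpos
    simp at hpos
  · intro hacyc
    set r : Fin d → Fin d → Prop := fun a b => B b a ≠ 0 with hr
    set f : Fin d → ℕ :=
      fun i => (Finset.univ.filter fun j => Relation.ReflTransGen r j i).card with hf
    have hedge : ∀ a b : Fin d, B b a ≠ 0 → f a < f b := by
      intro a b hab
      apply Finset.card_lt_card
      rw [Finset.ssubset_iff_of_subset]
      · refine ⟨b, Finset.mem_filter.mpr ⟨Finset.mem_univ b, Relation.ReflTransGen.refl⟩, ?_⟩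
        intro hba
        have hba' : Relation.ReflTransGen r b a := (Finset.mem_filter.mp hba).2
        exact hacyc b (Relation.TransGen.tail' hba' hab)
      · intro x hx
        have hx' : Relation.ReflTransGen r x a := (Finset.mem_filter.mp hx).2
        exact Finset.mem_filter.mpr ⟨Finset.mem_univ x, hx'.tail hab⟩
    have key : ∀ k, ∀ i j : Fin d, (B ^ k) i j ≠ 0 → f j + k ≤ f i := by
      intro k
      induction k with
      | zero =>
        intro i j h
        simp only [pow_zero, Matrix.one_apply, ne_eq, ite_eq_right_iff, Classical.not_imp] at h
        rw [← h.1]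
        omega
      | succ k ih =>
        intro i j h
        rw [pow_succ', Matrix.mul_apply] at h
        obtain ⟨m, -, hm⟩ := Finset.exists_ne_zero_of_sum_ne_zero h
        have h1 : B i m ≠ 0 := fun h0 => hm (by simp [h0])
        have h2 : (B ^ k) m j ≠ 0 := fun h0 => hm (by simp [h0])
        have e1 := hedge m i h1
        have e2 := ih m j h2
        omega
    refine ⟨d, ?_⟩
    ext i j
    simp only [Matrix.zero_apply]
    by_contra h
    have hk := key d i j h
    have h1 : 1 ≤ f j :=
      Finset.card_pos.mpr ⟨j, Finset.mem_filter.mpr ⟨Finset.mem_univ j, Relation.ReflTransGen.refl⟩⟩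
    have h2 : f i ≤ d := le_trans (Finset.card_filter_le _ _) (by simp)
    omega
end
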